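/- Let G be a finite simple graph with positive integer vertex weights w, let k be a positive integer with w(v) ≤ k for every v ∈ V(G), and let G' be the unweighted graph obtained from G by attaching to every vertex v a new pendant path on w(v) − 1 new vertices (one endpoint of the path is made adjacent to v). If vi(G') ≤ k, then there exists S ⊆ V(G) such that |S| + max_{D ∈ cc(G−S)} w(D) ≤ k. -/
import Mathlib

open SimpleGraph

variable {V : Type*}

/-- The vertex sets of the connected components of `G − S`
(the subgraph of `G` induced on the complement of `S`). -/
def ccSets {W : Type*} (G : SimpleGraph W) (S : Set W) : Set (Set W) :=
  {D | ∃ c : (G.induce Sᶜ).ConnectedComponent, D = Subtype.val '' c.supp}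

/-- The total weight of a set of vertices. -/
noncomputable def wsum {W : Type*} (w : W → ℕ) (A : Set W) : ℕ := ∑ᶠ v ∈ A, w v

/-- The vertex integrity of an unweighted graph `H`:
`vi(H) = min_{S ⊆ V(H)} ( |S| + max_{D ∈ cc(H−S)} |D| )`,
the maximum over an empty collection being `0`. -/
noncomputable def vi {W : Type*} (H : SimpleGraph W) : ℕ :=
  sInf {k | ∃ S : Set W, k = S.ncard + sSup (Set.ncard '' ccSets H S)}

/-- The graph `G'` obtained from `G` by attaching to every vertex `v` a pendant path on
`w(v) − 1` new vertices; the new vertex `(v, 0)` is adjacent to `v`, and `(v, i)` is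
adjacent to `(v, i+1)`. -/
def pendGraph (G : SimpleGraph V) (w : V → ℕ) :
    SimpleGraph (V ⊕ (Σ v : V, Fin (w v - 1))) :=
  SimpleGraph.fromRel (fun a b => match a, b with
    | Sum.inl a, Sum.inl b => G.Adj a b
    | Sum.inl a, Sum.inr q => a = q.1 ∧ (q.2 : ℕ) = 0
    | Sum.inr q, Sum.inr r => q.1 = r.1 ∧ (r.2 : ℕ) = (q.2 : ℕ) + 1
    | _, _ => False)

lemma pend_adj_inr_inl (G : SimpleGraph V) (w : V → ℕ) (v : V) (i : Fin (w v - 1))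
    (hi : (i : ℕ) = 0) : (pendGraph G w).Adj (Sum.inr ⟨v, i⟩) (Sum.inl v) := by
  rw [pendGraph, SimpleGraph.fromRel_adj]
  refine ⟨by simp, Or.inr ?_⟩
  exact ⟨rfl, hi⟩

lemma pend_adj_inr_inr (G : SimpleGraph V) (w : V → ℕ) (v : V) (i j : Fin (w v - 1))
    (hij : (j : ℕ) = (i : ℕ) + 1) :
    (pendGraph G w).Adj (Sum.inr ⟨v, i⟩) (Sum.inr ⟨v, j⟩) := by
  rw [pendGraph, SimpleGraph.fromRel_adj]
  refine ⟨?_, Or.inl ?_⟩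
  · intro hcon
    injection hcon with h
    injection h with h1 h2
    have : i = j := h2
    rw [this] at hij; omega
  · exact ⟨rfl, hij⟩

lemma pend_adj_inl_inl (G : SimpleGraph V) (w : V → ℕ) (u v : V) (h : G.Adj u v) :
    (pendGraph G w).Adj (Sum.inl u) (Sum.inl v) := by
  rw [pendGraph, SimpleGraph.fromRel_adj]
  exact ⟨by simpa using h.ne, Or.inl h⟩

/-- Reachability along the pendant path. -/
lemma pend_reach (G : SimpleGraph V) (w : V → ℕ)
    (S' : Set (V ⊕ (Σ v : V, Fin (w v - 1)))) (v : V)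
    (hv : Sum.inl v ∈ S'ᶜ) (hvi : ∀ i : Fin (w v - 1), (Sum.inr ⟨v, i⟩ : V ⊕ _) ∈ S'ᶜ)
    (i : Fin (w v - 1)) :
    ((pendGraph G w).induce S'ᶜ).Reachable ⟨Sum.inr ⟨v, i⟩, hvi i⟩ ⟨Sum.inl v, hv⟩ := by
  suffices H : ∀ n (hn : n < w v - 1),
      ((pendGraph G w).induce S'ᶜ).Reachable ⟨Sum.inr ⟨v, ⟨n, hn⟩⟩, hvi _⟩ ⟨Sum.inl v, hv⟩ by
    have := H i.1 i.2
    simpa using this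
  intro n
  induction n with
  | zero =>
    intro hn
    refine SimpleGraph.Adj.reachable ?_
    show (pendGraph G w).Adj (Sum.inr ⟨v, ⟨0, hn⟩⟩) (Sum.inl v)
    exact pend_adj_inr_inl G w v ⟨0, hn⟩ rfl
  | succ m ih =>
    intro hn
    have hm : m < w v - 1 := Nat.lt_of_succ_lt hn
    have hadj : ((pendGraph G w).induce S'ᶜ).Adj ⟨Sum.inr ⟨v, ⟨m + 1, hn⟩⟩, hvi _⟩
        ⟨Sum.inr ⟨v, ⟨m, hm⟩⟩, hvi _⟩ := by
      show (pendGraph G w).Adj (Sum.inr ⟨v, ⟨m + 1, hn⟩⟩) (Sum.inr ⟨v, ⟨m, hm⟩⟩)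
      exact (pend_adj_inr_inr G w v ⟨m, hm⟩ ⟨m + 1, hn⟩ rfl).symm
    exact hadj.reachable.trans (ih hm)

/-- Counting: the expanded set has cardinality `wsum w D`. -/
lemma ncard_expand [Fintype V] (w : V → ℕ) (hw : ∀ v, 0 < w v) (D : Set V) :
    (Sum.inl '' D ∪ Sum.inr '' {q : Σ v : V, Fin (w v - 1) | q.1 ∈ D} :
      Set (V ⊕ (Σ v : V, Fin (w v - 1)))).ncard = wsum w D := by
  classical
  have hdisj : Disjoint (Sum.inl '' D : Set (V ⊕ (Σ v : V, Fin (w v - 1))))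
      (Sum.inr '' {q : Σ v : V, Fin (w v - 1) | q.1 ∈ D}) := by
    rw [Set.disjoint_left]
    rintro x ⟨a, -, rfl⟩ ⟨b, -, hcon⟩
    exact Sum.inl_ne_inr hcon.symm
  rw [Set.ncard_union_eq hdisj (Set.toFinite _) (Set.toFinite _),
    Set.ncard_image_of_injective _ Sum.inl_injective,
    Set.ncard_image_of_injective _ Sum.inr_injective]
  have h1 : {q : Σ v : V, Fin (w v - 1) | q.1 ∈ D}.ncard = ∑ v ∈ D.toFinset, (w v - 1) := by
    rw [Set.ncard_eq_toFinset_card']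
    have he : {q : Σ v : V, Fin (w v - 1) | q.1 ∈ D}.toFinset
        = D.toFinset.sigma (fun v => Finset.univ) := by
      ext q; simp [Finset.mem_sigma]
    rw [he, Finset.card_sigma]
    simp
  have h2 : D.ncard = D.toFinset.card := Set.ncard_eq_toFinset_card' D
  have h3 : wsum w D = ∑ v ∈ D.toFinset, w v := by
    rw [wsum, ← Set.coe_toFinset D, finsum_mem_coe_finset]
    simp
  rw [h1, h2, h3, Finset.card_eq_sum_ones, ← Finset.sum_add_distrib]
  exact Finset.sum_congr rfl fun v _ => by have := hw v; omega

/-- If `w(v) ≤ k` for all `v` and the graph `G'` obtained by attaching to every vertex `v`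
a pendant path on `w(v) − 1` vertices satisfies `vi(G') ≤ k`, then `G` has a set `S` with
`|S| + max_{D ∈ cc(G−S)} w(D) ≤ k`. -/
theorem swvi_of_vi_pendGraph [Fintype V] (G : SimpleGraph V) (w : V → ℕ)
    (hw : ∀ v, 0 < w v) (k : ℕ) (hk : 0 < k) (hwk : ∀ v, w v ≤ k)
    (h : vi (pendGraph G w) ≤ k) :
    ∃ S : Set V, S.ncard + sSup (wsum w '' ccSets G S) ≤ k := by
  classical
  -- extract an optimal separator S' for the pendant graph
  have hne : {m | ∃ S : Set (V ⊕ (Σ v : V, Fin (w v - 1))),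
      m = S.ncard + sSup (Set.ncard '' ccSets (pendGraph G w) S)}.Nonempty := ⟨_, ∅, rfl⟩
  obtain ⟨S', hS'⟩ := Nat.sInf_mem hne
  have hS'k : S'.ncard + sSup (Set.ncard '' ccSets (pendGraph G w) S') ≤ k := by
    rw [← hS']; exact h
  set p : (V ⊕ (Σ v : V, Fin (w v - 1))) → V := Sum.elim id Sigma.fst with hp
  refine ⟨p '' S', ?_⟩
  set S : Set V := p '' S' with hS
  have hcard : S.ncard ≤ S'.ncard := Set.ncard_image_le (Set.toFinite S')
  have hbdd : BddAbove (Set.ncard '' ccSets (pendGraph G w) S') :=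
    (Set.toFinite _).bddAbove
  have hinS' : ∀ v : V, v ∉ S → Sum.inl v ∈ S'ᶜ := fun v hv hmem => hv ⟨_, hmem, rfl⟩
  have hinrS' : ∀ (v : V) (i : Fin (w v - 1)), v ∉ S → (Sum.inr ⟨v, i⟩ : V ⊕ _) ∈ S'ᶜ :=
    fun v i hv hmem => hv ⟨_, hmem, rfl⟩
  have fmem : ∀ u : ↥Sᶜ, (Sum.inl (u : V) : V ⊕ (Σ v : V, Fin (w v - 1))) ∈ S'ᶜ :=
    fun u => hinS' u u.2
  let f : G.induce Sᶜ →g (pendGraph G w).induce S'ᶜ :=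
    ⟨fun u => ⟨Sum.inl (u : V), fmem u⟩, by
      intro a b hab
      have hab' : G.Adj a b := hab
      show (pendGraph G w).Adj (Sum.inl (a : V)) (Sum.inl (b : V))
      exact pend_adj_inl_inl G w _ _ hab'⟩
  have key : ∀ b ∈ wsum w '' ccSets G S,
      b ≤ sSup (Set.ncard '' ccSets (pendGraph G w) S') := by
    rintro b ⟨D, ⟨c, rfl⟩, rfl⟩
    obtain ⟨v₀, hv₀⟩ := c.exists_rep
    set c' := ((pendGraph G w).induce S'ᶜ).connectedComponentMk (f v₀) with hc'
    -- every vertex of D (with pendant path) lies in c'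
    have hreach_inl : ∀ u : ↥Sᶜ, u ∈ c.supp →
        ((pendGraph G w).induce S'ᶜ).Reachable (f u) (f v₀) := by
      intro u hu
      have : ((G.induce Sᶜ).connectedComponentMk u) = ((G.induce Sᶜ).connectedComponentMk v₀) := by
        rw [SimpleGraph.ConnectedComponent.mem_supp_iff] at hu
        rw [hu]; exact hv₀.symm
      exact ((SimpleGraph.ConnectedComponent.exact this)).map f
    have hsub : (Sum.inl '' (Subtype.val '' c.supp) ∪
        Sum.inr '' {q : Σ v : V, Fin (w v - 1) | q.1 ∈ Subtype.val '' c.supp} :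
        Set (V ⊕ (Σ v : V, Fin (w v - 1)))) ⊆ Subtype.val '' c'.supp := by
      rintro x (⟨v, ⟨u, hu, rfl⟩, rfl⟩ | ⟨⟨v', i⟩, ⟨u, hu, huv⟩, rfl⟩)
      · refine ⟨f u, ?_, rfl⟩
        rw [SimpleGraph.ConnectedComponent.mem_supp_iff, hc']
        exact SimpleGraph.ConnectedComponent.sound (hreach_inl u hu)
      · dsimp at huv
        subst huv
        refine ⟨⟨Sum.inr ⟨(u : V), i⟩, hinrS' _ i u.2⟩, ?_, rfl⟩
        rw [SimpleGraph.ConnectedComponent.mem_supp_iff, hc']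
        refine SimpleGraph.ConnectedComponent.sound ?_
        exact (pend_reach G w S' (u : V) (fmem u) (fun j => hinrS' _ j u.2) i).trans
          (hreach_inl u hu)
    calc wsum w (Subtype.val '' c.supp)
        = (Sum.inl '' (Subtype.val '' c.supp) ∪
            Sum.inr '' {q : Σ v : V, Fin (w v - 1) | q.1 ∈ Subtype.val '' c.supp} :
            Set (V ⊕ (Σ v : V, Fin (w v - 1)))).ncard := (ncard_expand w hw _).symm
      _ ≤ (Subtype.val '' c'.supp).ncard := Set.ncard_le_ncard hsub (Set.toFinite _)
      _ ≤ sSup (Set.ncard '' ccSets (pendGraph G w) S') :=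
          le_csSup hbdd ⟨_, ⟨c', rfl⟩, rfl⟩
  have hsup : sSup (wsum w '' ccSets G S) ≤ sSup (Set.ncard '' ccSets (pendGraph G w) S') := by
    rcases (wsum w '' ccSets G S).eq_empty_or_nonempty with he | hne2
    · simp [he]
    · exact csSup_le hne2 key
  calc S.ncard + sSup (wsum w '' ccSets G S)
      ≤ S'.ncard + sSup (Set.ncard '' ccSets (pendGraph G w) S') := add_le_add hcard hsup
    _ ≤ k := hS'k
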